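/- arXiv:0712.3306 — 2 statements merged into one kernel-verified Lean document; each statement's English description precedes it below -/
import Mathlib

section
/- A subalgebra U of a finite-dimensional Lie algebra L is intravariant in L if and only if for every Lie algebra L* containing L as an ideal, L* = L + N_{L*}(U), where N_{L*}(U) denotes the normalizer of U in L*. -/
universe u

/-- A subalgebra `U` of `L` is intravariant if every derivation of `L` is expressible as the
sum of an inner derivation and a derivation which stabilises `U`. -/
def IsIntravariant (𝕜 L : Type u) [Field 𝕜] [LieRing L] [LieAlgebra 𝕜 L]
    (U : LieSubalgebra 𝕜 L) : Prop :=
  ∀ d : LieDerivation 𝕜 L L, ∃ (x : L) (e : LieDerivation 𝕜 L L),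
    d = LieDerivation.ad 𝕜 L x + e ∧ ∀ u ∈ U, e u ∈ U

/-!
If `f : L → L*` embeds `L` as an ideal, every `x ∈ L*` acts on `L` by the derivation
`D_x = f⁻¹ ∘ ad x ∘ f`, and `x = f y + n` with `n` normalising `f U` exactly when
`D_x - ad y` stabilises `U`; so `L* = L + N_{L*}(U)` as soon as `U` is intravariant. Conversely,
in the semidirect sum `L ⋊ Der L` the element `(0, d)` acts on `L` by `d` itself, so the
decomposition of `(0, d)` yields the decomposition of `d`.
-/

section

variable {R L L' : Type*} [CommRing R] [LieRing L] [LieAlgebra R L] [LieRing L'] [LieAlgebra R L']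

theorem LieSubalgebra.mem_sup_iff_of_lie_mem_left {M N : LieSubalgebra R L'}
    (hM : ∀ x y : L', y ∈ M → ⁅x, y⁆ ∈ M) {z : L'} :
    z ∈ M ⊔ N ↔ ∃ m ∈ M, ∃ n ∈ N, m + n = z := by
  refine ⟨fun hz => ?_, fun ⟨m, hm, n, hn, hmn⟩ => hmn ▸ add_mem
    (le_sup_left (a := M) (b := N) hm) (le_sup_right (a := M) (b := N) hn)⟩
  let P : LieSubalgebra R L' :=
    { toSubmodule := M.toSubmodule ⊔ N.toSubmodule
      lie_mem' := by
        intro x y hx hy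
        obtain ⟨m₁, hm₁, n₁, hn₁, rfl⟩ := Submodule.mem_sup.mp hx
        obtain ⟨m₂, hm₂, n₂, hn₂, rfl⟩ := Submodule.mem_sup.mp hy
        have hsplit : ⁅m₁ + n₁, m₂ + n₂⁆ = (⁅m₁ + n₁, m₂⁆ - ⁅n₂, m₁⁆) + ⁅n₁, n₂⁆ := by
          simp only [lie_add, add_lie, ← lie_skew m₁ n₂]; abel
        rw [hsplit]
        exact add_mem (Submodule.mem_sup_left (sub_mem (hM _ _ hm₂) (hM _ _ hm₁)))
          (Submodule.mem_sup_right (N.lie_mem hn₁ hn₂)) }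
  have hle : M ⊔ N ≤ P := sup_le (fun _ => Submodule.mem_sup_left) fun _ => Submodule.mem_sup_right
  exact Submodule.mem_sup.mp (hle hz)

theorem LieSubalgebra.apply_mem_map_iff_of_injective {f : L →ₗ⁅R⁆ L'} (hf : Function.Injective f)
    {U : LieSubalgebra R L} {z : L} : f z ∈ U.map f ↔ z ∈ U :=
  (LieSubalgebra.mem_map f U (f z)).trans ⟨fun ⟨_, hw, hwz⟩ => hf hwz ▸ hw, fun hz => ⟨z, hz, rfl⟩⟩

end

namespace LieHom

variable {R L L' : Type*} [CommRing R] [LieRing L] [LieAlgebra R L] [LieRing L'] [LieAlgebra R L']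
  (f : L →ₗ⁅R⁆ L') (hf : Function.Injective f) (hI : ∀ x y : L', y ∈ f.range → ⁅x, y⁆ ∈ f.range)

noncomputable def pullbackAdLinear (x : L') : L →ₗ[R] L :=
  (LinearEquiv.ofInjective (f : L →ₗ[R] L') hf).symm ∘ₗ
    (LieAlgebra.ad R L' x ∘ₗ (f : L →ₗ[R] L')).codRestrict _
      fun z => LinearMap.mem_range.mpr <| (f.mem_range _).mp (hI x (f z) (f.mem_range_self z))

theorem apply_pullbackAdLinear (x : L') (z : L) : f (f.pullbackAdLinear hf hI x z) = ⁅x, f z⁆ :=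
  LinearEquiv.ofInjective_symm_apply (f : L →ₗ[R] L') (h := hf) _

noncomputable def pullbackAd (x : L') : LieDerivation R L L where
  toLinearMap := f.pullbackAdLinear hf hI x
  leibniz' a b := hf <| by
    rw [map_sub, map_lie, map_lie, apply_pullbackAdLinear, apply_pullbackAdLinear,
      apply_pullbackAdLinear, map_lie, leibniz_lie, ← lie_skew (f b)]
    abel

theorem apply_pullbackAd (x : L') (z : L) : f (f.pullbackAd hf hI x z) = ⁅x, f z⁆ :=
  f.apply_pullbackAdLinear hf hI x z

theorem sub_mem_normalizer_map_iff (U : LieSubalgebra R L) (x : L') (y : L) :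
    x - f y ∈ (U.map f).normalizer ↔
      ∀ u ∈ U, (f.pullbackAd hf hI x - LieDerivation.ad R L y) u ∈ U := by
  have hbracket (u : L) :
      ⁅x - f y, f u⁆ = f ((f.pullbackAd hf hI x - LieDerivation.ad R L y) u) := by
    rw [LieDerivation.sub_apply, map_sub, apply_pullbackAd, LieDerivation.ad_apply_apply,
      map_lie, sub_lie]
  rw [LieSubalgebra.mem_normalizer_iff]
  refine ⟨fun h u hu => ?_, fun h v hv => ?_⟩
  · rw [← LieSubalgebra.apply_mem_map_iff_of_injective hf, ← hbracket]
    exact h _ ((LieSubalgebra.apply_mem_map_iff_of_injective hf).mpr hu)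
  · obtain ⟨u, hu, rfl⟩ := (LieSubalgebra.mem_map f U v).mp hv
    rw [hbracket, LieSubalgebra.apply_mem_map_iff_of_injective hf]
    exact h u hu

theorem mem_range_sup_normalizer_map_iff (U : LieSubalgebra R L) (x : L') :
    x ∈ f.range ⊔ (U.map f).normalizer ↔ ∃ (y : L) (e : LieDerivation R L L),
      f.pullbackAd hf hI x = LieDerivation.ad R L y + e ∧ ∀ u ∈ U, e u ∈ U := by
  calc x ∈ f.range ⊔ (U.map f).normalizer
      ↔ ∃ y : L, x - f y ∈ (U.map f).normalizer := by
        rw [LieSubalgebra.mem_sup_iff_of_lie_mem_left hI]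
        constructor
        · rintro ⟨m, hm, n, hn, rfl⟩
          obtain ⟨y, rfl⟩ := (f.mem_range m).mp hm
          exact ⟨y, by rwa [add_sub_cancel_left]⟩
        · rintro ⟨y, hy⟩
          exact ⟨f y, f.mem_range_self y, x - f y, hy, add_sub_cancel _ _⟩
    _ ↔ _ := by
        simp only [f.sub_mem_normalizer_map_iff hf hI]
        constructor
        · rintro ⟨y, hy⟩
          exact ⟨y, _, (add_sub_cancel _ _).symm, hy⟩
        · rintro ⟨y, e, he, hU⟩
          exact ⟨y, by rwa [he, add_sub_cancel_left]⟩

end LieHom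

namespace LieAlgebra.SemiDirectSum

variable {R K L : Type*} [CommRing R] [LieRing K] [LieAlgebra R K] [LieRing L] [LieAlgebra R L]
  (ψ : L →ₗ⁅R⁆ LieDerivation R K K)

instance [Module.Finite R K] [Module.Finite R L] : Module.Finite R (K ⋊⁅ψ⁆ L) :=
  Module.Finite.equiv (toProdl ψ).symm

theorem lie_mem_range_inl (x y : K ⋊⁅ψ⁆ L) (hy : y ∈ (inl ψ).range) : ⁅x, y⁆ ∈ (inl ψ).range := by
  obtain ⟨z, rfl⟩ := ((inl ψ).mem_range y).mp hy
  exact ((inl ψ).mem_range _).mpr ⟨⁅x.left, z⁆ + ψ x.right z, by simp⟩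

theorem pullbackAd_inr (D : L) :
    (inl ψ).pullbackAd (inl_injective ψ) (lie_mem_range_inl ψ) (inr ψ D) = ψ D :=
  LieDerivation.ext fun z => inl_injective ψ <| by simp [LieHom.apply_pullbackAd]

end LieAlgebra.SemiDirectSum

open LieAlgebra

/-- A subalgebra `U` of a finite-dimensional Lie algebra `L` is intravariant in `L` if and only
if for every Lie algebra `L*` containing `L` as an ideal, `L* = L + N_{L*}(U)`. -/
theorem intravariant_iff_normalizer_sup_eq_top
    (𝕜 : Type u) [Field 𝕜] (L : Type u) [LieRing L] [LieAlgebra 𝕜 L] [FiniteDimensional 𝕜 L]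
    (U : LieSubalgebra 𝕜 L) :
    IsIntravariant 𝕜 L U ↔
      ∀ (L' : Type u) [LieRing L'] [LieAlgebra 𝕜 L'] [FiniteDimensional 𝕜 L']
        (f : L →ₗ⁅𝕜⁆ L'), Function.Injective f →
          (∀ x y : L', y ∈ f.range → ⁅x, y⁆ ∈ f.range) →
          f.range ⊔ (U.map f).normalizer = ⊤ := by
  constructor
  · intro h L' _ _ _ f hf hI
    exact eq_top_iff.mpr fun x _ => (f.mem_range_sup_normalizer_map_iff hf hI U x).mpr (h _)
  · intro h d
    let ψ : LieDerivation 𝕜 L L →ₗ⁅𝕜⁆ LieDerivation 𝕜 L L := LieHom.id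
    have hinj := SemiDirectSum.inl_injective ψ
    have hI := SemiDirectSum.lie_mem_range_inl ψ
    have hd := (SemiDirectSum.inl ψ).mem_range_sup_normalizer_map_iff hinj hI U
      (SemiDirectSum.inr ψ d)
    rw [SemiDirectSum.pullbackAd_inr] at hd
    exact hd.mp (h _ _ hinj hI ▸ LieSubalgebra.mem_top _)
end

section
/- Let U be a subalgebra of the soluble Lie algebra L such that U contains a minimal ideal A of L and U/A is intravariant in L/A. Let d be a derivation of L with d(A) ⊆ A, let D = ⟨d⟩⋉L, and suppose N_D(U+A) = N_D(U). Then N_D(U) + L = D. -/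
universe u


/-- The split extension `⟨d⟩ ⋉ L` of a Lie algebra `L` by a derivation `d`. -/
def DerExt (K L : Type u) [CommRing K] [LieRing L] [LieAlgebra K L]
    (d : LieDerivation K L L) : Type u := K × L

namespace DerExt

variable {K L : Type u} [CommRing K] [LieRing L] [LieAlgebra K L] (d : LieDerivation K L L)

instance : AddCommGroup (DerExt K L d) := inferInstanceAs (AddCommGroup (K × L))
instance : Module K (DerExt K L d) := inferInstanceAs (Module K (K × L))

instance : LieRing (DerExt K L d) where
  bracket x y := ((0 : K), x.1 • d y.2 - y.1 • d x.2 + ⁅x.2, y.2⁆)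
  add_lie x y z := by
    show ((0 : K), ((x.1 + y.1 : K)) • d z.2 - z.1 • d (x.2 + y.2) + ⁅(x.2 + y.2 : L), z.2⁆)
      = (((0 : K), x.1 • d z.2 - z.1 • d x.2 + ⁅x.2, z.2⁆) : K × L)
        + ((0 : K), y.1 • d z.2 - z.1 • d y.2 + ⁅y.2, z.2⁆)
    rw [Prod.mk_add_mk, Prod.mk.injEq]
    refine ⟨(add_zero _).symm, ?_⟩
    simp only [map_add, smul_add, add_smul, add_lie]
    abel
  lie_add x y z := by
    show ((0 : K), x.1 • d (y.2 + z.2) - ((y.1 + z.1 : K)) • d x.2 + ⁅x.2, (y.2 + z.2 : L)⁆)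
      = (((0 : K), x.1 • d y.2 - y.1 • d x.2 + ⁅x.2, y.2⁆) : K × L)
        + ((0 : K), x.1 • d z.2 - z.1 • d x.2 + ⁅x.2, z.2⁆)
    rw [Prod.mk_add_mk, Prod.mk.injEq]
    refine ⟨(add_zero _).symm, ?_⟩
    simp only [map_add, smul_add, add_smul, lie_add]
    abel
  lie_self x := by
    show ((0 : K), x.1 • d x.2 - x.1 • d x.2 + ⁅x.2, x.2⁆) = ((0 : K), (0 : L))
    rw [Prod.mk.injEq]
    exact ⟨rfl, by rw [sub_self, lie_self, add_zero]⟩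
  leibniz_lie x y z := by
    show ((0 : K), x.1 • d (y.1 • d z.2 - z.1 • d y.2 + ⁅y.2, z.2⁆) - (0 : K) • d x.2
            + ⁅x.2, y.1 • d z.2 - z.1 • d y.2 + ⁅y.2, z.2⁆⁆)
      = (((0 : K), (0 : K) • d z.2 - z.1 • d (x.1 • d y.2 - y.1 • d x.2 + ⁅x.2, y.2⁆)
            + ⁅(x.1 • d y.2 - y.1 • d x.2 + ⁅x.2, y.2⁆ : L), z.2⁆) : K × L)
        + ((0 : K), y.1 • d (x.1 • d z.2 - z.1 • d x.2 + ⁅x.2, z.2⁆) - (0 : K) • d y.2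
            + ⁅y.2, x.1 • d z.2 - z.1 • d x.2 + ⁅x.2, z.2⁆⁆)
    rw [Prod.mk_add_mk, Prod.mk.injEq]
    refine ⟨(add_zero _).symm, ?_⟩
    simp only [map_add, map_sub, map_smul, LieDerivation.apply_lie_eq_add, zero_smul,
      smul_add, smul_sub, smul_smul, lie_add, add_lie, lie_sub, sub_lie, lie_smul, smul_lie,
      lie_lie]
    simp only [← lie_skew (d x.2) y.2, smul_neg, neg_neg]
    module
  
instance : LieAlgebra K (DerExt K L d) where
  lie_smul t x y := by
    show ((0 : K), x.1 • d (t • y.2) - ((t • y.1 : K)) • d x.2 + ⁅x.2, (t • y.2 : L)⁆)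
      = t • (((0 : K), x.1 • d y.2 - y.1 • d x.2 + ⁅x.2, y.2⁆) : K × L)
    rw [Prod.smul_mk, Prod.mk.injEq]
    refine ⟨(smul_zero t).symm, ?_⟩
    rw [map_smul, lie_smul]
    simp only [smul_eq_mul]
    module

/-- The canonical embedding of `L` into the split extension by a derivation. -/
def inr : L →ₗ⁅K⁆ DerExt K L d where
  toFun x := (((0 : K), x) : K × L)
  map_add' x y := by
    show (((0 : K), x + y) : K × L) = (0, x) + (0, y)
    exact Prod.ext (add_zero (0 : K)).symm rfl
  map_smul' t x := by
    show (((0 : K), t • x) : K × L) = t • (0, x)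
    exact Prod.ext (smul_zero t).symm rfl
  map_lie' {x y} := by
    show (((0 : K), ⁅x, y⁆) : K × L) = (0, (0 : K) • d y - (0 : K) • d x + ⁅x, y⁆)
    rw [Prod.mk.injEq]
    exact ⟨rfl, by rw [zero_smul, zero_smul, sub_self, zero_add]⟩

end DerExt

/-- The quotient map `L → L ⧸ I` as a morphism of Lie algebras. -/
def lieQuotMk (𝕜 L : Type u) [Field 𝕜] [LieRing L] [LieAlgebra 𝕜 L] (I : LieIdeal 𝕜 L) :
    L →ₗ⁅𝕜⁆ L ⧸ I :=
  { (LieSubmodule.Quotient.mk' I).toLinearMap with map_lie' := fun {_ _} => rfl }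

set_option maxHeartbeats 1000000

/-- Let `A` be a minimal ideal of `L` contained in the subalgebra `U`, with `U/A` intravariant
in `L/A`.  If `d` is a derivation of `L` with `d(A) ⊆ A` and, in the split extension
`D = ⟨d⟩ ⋉ L`, one has `N_D(U + A) = N_D(U)`, then `N_D(U) + L = D`. -/
theorem normalizer_sup_eq_top_of_quotient_intravariant
    (𝕜 L : Type u) [Field 𝕜] [LieRing L] [LieAlgebra 𝕜 L] [FiniteDimensional 𝕜 L]
    [LieAlgebra.IsSolvable L] (A : LieIdeal 𝕜 L) (hA : IsAtom A)
    (U : LieSubalgebra 𝕜 L) (hAU : (A : LieSubalgebra 𝕜 L) ≤ U)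
    (d : LieDerivation 𝕜 L L) (hd : ∀ a ∈ A, d a ∈ A)
    (hintra : IsIntravariant 𝕜 (L ⧸ A) (U.map (lieQuotMk 𝕜 L A)))
    (hnorm : ((U ⊔ (A : LieSubalgebra 𝕜 L)).map (DerExt.inr d)).normalizer
        = (U.map (DerExt.inr d)).normalizer) :
    (U.map (DerExt.inr d)).normalizer ⊔ (DerExt.inr d).range = ⊤ := by
  classical
  -- the derivation induced by `d` on `L ⧸ A`
  set π := lieQuotMk 𝕜 L A with hπ
  have hπsurj : Function.Surjective π := LieSubmodule.Quotient.surjective_mk' A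
  let f : (L ⧸ A) →ₗ[𝕜] (L ⧸ A) :=
    Submodule.mapQ (A : Submodule 𝕜 L) (A : Submodule 𝕜 L) (d : L →ₗ[𝕜] L) hd
  have hf : ∀ x : L, f (π x) = π (d x) := fun x => rfl
  have hπbr : ∀ x y : L, π ⁅x, y⁆ = ⁅π x, π y⁆ := fun x y => rfl
  let dbar : LieDerivation 𝕜 (L ⧸ A) (L ⧸ A) :=
    { toLinearMap := f
      leibniz' := by
        intro a b
        obtain ⟨a, rfl⟩ := hπsurj a
        obtain ⟨b, rfl⟩ := hπsurj b
        show f ⁅π a, π b⁆ = ⁅π a, f (π b)⁆ - ⁅π b, f (π a)⁆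
        rw [← hπbr, hf, hf, hf, d.apply_lie_eq_sub a b, map_sub π, hπbr, hπbr] }
  obtain ⟨xbar, e, heq, he⟩ := hintra dbar
  obtain ⟨x, rfl⟩ := hπsurj xbar
  -- the key fact: `d u - ⁅x, u⁆ ∈ U` for all `u ∈ U`
  have key : ∀ u ∈ U, d u - ⁅x, u⁆ ∈ U := by
    intro u hu
    have h1 : dbar (π u) = ⁅π x, π u⁆ + e (π u) := by
      rw [heq, LieDerivation.add_apply]
      congr 1
      simp
    have h2 : e (π u) ∈ U.map π := he (π u) ⟨u, hu, rfl⟩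
    obtain ⟨u', hu', hu'eq⟩ := h2
    have hu'eq' : π u' = e (π u) := hu'eq
    have h3 : π (d u - ⁅x, u⁆) = π u' := by
      have h3a : π (d u - ⁅x, u⁆) = dbar (π u) - ⁅π x, π u⁆ := by
        rw [map_sub π, ← hf, hπbr]; rfl
      rw [h3a, h1, hu'eq']
      abel
    have h4 : d u - ⁅x, u⁆ - u' ∈ A := by
      have h5 := sub_eq_zero.mpr h3
      rw [← map_sub π] at h5
      exact (LieSubmodule.Quotient.mk_eq_zero A).mp h5
    have : d u - ⁅x, u⁆ = (d u - ⁅x, u⁆ - u') + u' := by abel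
    rw [this]
    exact U.add_mem (hAU h4) hu'
  -- the element `(1, -x)` normalizes `U.map inr`
  let z : DerExt 𝕜 L d := ((1 : 𝕜), -x)
  have hmem : z ∈ (U.map (DerExt.inr d)).normalizer := by
    rw [LieSubalgebra.mem_normalizer_iff]
    intro w hw
    obtain ⟨u, hu, rfl⟩ := hw
    have hbr : ⁅z, (DerExt.inr d) u⁆ = (DerExt.inr d) (d u - ⁅x, u⁆) := by
      show (((0 : 𝕜), (1 : 𝕜) • d u - (0 : 𝕜) • d (-x) + ⁅-x, u⁆) : 𝕜 × L)
        = ((0 : 𝕜), d u - ⁅x, u⁆)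
      rw [Prod.mk.injEq]
      refine ⟨rfl, ?_⟩
      rw [one_smul, zero_smul, sub_zero, neg_lie]
      abel
    show ⁅z, (DerExt.inr d) u⁆ ∈ U.map (DerExt.inr d)
    rw [hbr]
    exact ⟨d u - ⁅x, u⁆, key u hu, rfl⟩
  -- conclude
  rw [eq_top_iff]
  intro w _
  set S := (U.map (DerExt.inr d)).normalizer ⊔ (DerExt.inr d).range with hS
  have h1 : w.1 • z ∈ S :=
    LieSubalgebra.smul_mem S w.1 (le_sup_left (a := (U.map (DerExt.inr d)).normalizer) hmem)
  have hle : (DerExt.inr d).range ≤ S := le_sup_right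
  have h2 : (DerExt.inr d) (w.2 + w.1 • x) ∈ S :=
    hle ((DerExt.inr d).mem_range_self (w.2 + w.1 • x))
  have h3 : w = w.1 • z + (DerExt.inr d) (w.2 + w.1 • x) := by
    show w = (w.1 • (((1 : 𝕜), -x) : 𝕜 × L) + (((0 : 𝕜), w.2 + w.1 • x) : 𝕜 × L) : 𝕜 × L)
    rw [Prod.smul_mk, Prod.mk_add_mk]
    have : (w : 𝕜 × L) = (w.1, w.2) := rfl
    rw [this]; show ((w.1, w.2) : 𝕜 × L) = (w.1 • 1 + 0, w.1 • -x + (w.2 + w.1 • x)); rw [Prod.mk.injEq]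
    constructor
    · rw [smul_eq_mul, mul_one, add_zero]
    · rw [smul_neg]
      abel
  rw [h3]
  exact S.add_mem h1 h2
end
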